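/- arXiv:2305.01100 — 2 statements merged into one kernel-verified Lean document; each statement's English description precedes it below -/
import Mathlib

section
/- Let n ≥ 2 and let α be a set partition of {1,…,n} into two blocks C₁ and C₂ of cardinalities p and n−p respectively. Let s₁ = #{x ∈ C₁ : σ⁻¹(x) ∈ C₁}, where σ is the cyclic permutation (1,2,…,n). Then the genus of α equals p − 1 − s₁; equivalently, the number of cycles of σ∘τ⁻¹ equals n − 1 − 2(p − 1 − s₁), where τ is the permutation associated to α. -/
/-!
STATEMENT 2: Let n ≥ 2 and let α be a set partition of {1,…,n} into two blocks C₁, C₂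
of cardinalities p and n−p, and s₁ = #{x ∈ C₁ : σ⁻¹(x) ∈ C₁}, σ = (1,2,…,n)
(here `finRotate n` on `Fin n`).  Then the genus of α equals p − 1 − s₁, i.e.
2(p − 1 − s₁) = n + 1 − k − f(α) with k = 2; equivalently the number f(α) of cycles of
σ∘τ⁻¹ equals n − 1 − 2(p − 1 − s₁).
-/

open Finset

variable {n : ℕ}

/-- The increasing cycle on a block `b`, as a permutation of `Fin n`. -/
def blockPerm (b : Finset (Fin n)) : Equiv.Perm (Fin n) :=
  (b.sort (· ≤ ·)).formPerm

/-- The permutation `τ` associated to a set partition: the product of the increasing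
cycles on the blocks. -/
def partPerm (P : Finpartition (univ : Finset (Fin n))) : Equiv.Perm (Fin n) :=
  P.parts.noncommProd blockPerm (by
    intro a ha b hb hab
    have hd : Disjoint a b := P.disjoint ha hb hab
    apply Equiv.Perm.Disjoint.commute
    intro x
    by_cases hx : x ∈ a
    · right
      apply List.formPerm_apply_of_notMem
      rw [Finset.mem_sort]
      exact fun hxb => Finset.disjoint_left.mp hd hx hxb
    · left
      apply List.formPerm_apply_of_notMem
      rw [Finset.mem_sort]
      exact hx)

/-- The number of cycles of a permutation, counting fixed points as cycles of length 1. -/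
def cycleCount (π : Equiv.Perm (Fin n)) : ℕ :=
  π.cycleType.card + (univ.filter fun x => π x = x).card

/-- `f(α)`: the number of cycles of `σ ∘ τ⁻¹`, where `σ = (1,2,…,n)`. -/
def partFaces (P : Finpartition (univ : Finset (Fin n))) : ℕ :=
  cycleCount (finRotate n * (partPerm P)⁻¹)

open Fin.CommRing

/-- cyclic distance from `a` to `z` going forward. -/
def rk (a z : Fin (n + 2)) : ℕ := (z - a).val

lemma rk_lt (a z : Fin (n + 2)) : rk a z < n + 2 := (z - a).isLt

lemma rk_inj (a : Fin (n + 2)) : Function.Injective (rk a) := by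
  intro y z h
  have : y - a = z - a := Fin.val_injective h
  exact sub_left_injective this

lemma rk_eq_zero_iff {a z : Fin (n + 2)} : rk a z = 0 ↔ z = a := by
  rw [rk]
  constructor
  · intro h
    have : z - a = 0 := Fin.val_injective (by simpa using h)
    exact sub_eq_zero.mp this
  · rintro rfl
    simp [sub_self]

lemma rk_val (a z : Fin (n + 2)) :
    rk a z = if a.val ≤ z.val then z.val - a.val else z.val + (n + 2) - a.val := by
  have ha := a.isLt
  have hz := z.isLt
  rw [rk, Fin.sub_def]
  simp only
  split_ifs with h
  · have h1 : (n + 2 - a.val) + z.val = (n + 2) + (z.val - a.val) := by omega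
    rw [h1, Nat.add_mod_left, Nat.mod_eq_of_lt (by omega)]
  · rw [Nat.mod_eq_of_lt (by omega)]
    omega

lemma rk_sub_one {a z : Fin (n + 2)} (h : z ≠ a) : rk a (z - 1) = rk a z - 1 := by
  have h1 : z - 1 - a = (z - a) - 1 := by ring
  have h2 : z - a ≠ 0 := sub_ne_zero.mpr h
  have h3 : (0 : Fin (n + 2)).val < (z - a).val := by
    rcases Nat.eq_zero_or_pos (z - a).val with h4 | h4
    · exact absurd (Fin.val_injective (by simpa using h4)) h2
    · simpa using h4
  have h5 : ((z - a) - 1).val = rk 1 (z - a) := rfl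
  rw [rk, h1, h5, rk_val]
  simp only [Fin.val_one]
  split_ifs with h6
  · exact if_pos h6
  · omega

lemma rk_self_sub_one (a : Fin (n + 2)) : rk a (a - 1) = n + 1 := by
  have h1 : a - 1 - a = (0 : Fin (n+2)) - 1 := by ring
  rw [rk, h1]
  have := rk_val (1 : Fin (n+2)) 0
  rw [rk] at this
  simp only [Fin.val_one, Fin.val_zero] at this
  rw [show (0 : Fin (n+2)) - 1 = 0 - 1 from rfl, this]
  exact (if_neg (show ¬ (1:ℕ) ≤ 0 by omega)).trans (by omega)

lemma rk_succ (a z : Fin (n + 2)) :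
    rk (a + 1) z = if z = a then n + 1 else rk a z - 1 := by
  have h1 : z - (a + 1) = (z - 1) - a := by ring
  rw [rk, h1, ← rk]
  split_ifs with h
  · subst h
    exact rk_self_sub_one z
  · exact rk_sub_one h

/-- the first element of `S` at or cyclically after `a`. -/
def nextIn (S : Finset (Fin (n + 2))) (hS : S.Nonempty) (a : Fin (n + 2)) : Fin (n + 2) :=
  a + (S.image (fun z => z - a)).min' (hS.image _)

lemma nextIn_mem (S : Finset (Fin (n + 2))) (hS : S.Nonempty) (a : Fin (n + 2)) :
    nextIn S hS a ∈ S := by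
  obtain ⟨z, hz, hz'⟩ := Finset.mem_image.mp ((S.image (fun z => z - a)).min'_mem (hS.image _))
  rw [nextIn, ← hz']
  have : a + (z - a) = z := by ring
  rwa [this]

lemma rk_nextIn_le (S : Finset (Fin (n + 2))) (hS : S.Nonempty) (a : Fin (n + 2))
    {z : Fin (n + 2)} (hz : z ∈ S) : rk a (nextIn S hS a) ≤ rk a z := by
  have h1 : nextIn S hS a - a = (S.image (fun z => z - a)).min' (hS.image _) := by
    rw [nextIn]; ring
  rw [rk, h1]
  exact Finset.min'_le (S.image fun w => w - a) (z - a) (Finset.mem_image_of_mem _ hz)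

lemma nextIn_unique {S : Finset (Fin (n + 2))} (hS : S.Nonempty) {a w : Fin (n + 2)}
    (hw : w ∈ S) (hmin : ∀ z ∈ S, rk a w ≤ rk a z) : nextIn S hS a = w :=
  rk_inj a (le_antisymm (rk_nextIn_le S hS a hw) (hmin _ (nextIn_mem S hS a)))

lemma blockPerm_apply_of_not_mem (b : Finset (Fin n)) {x : Fin n} (h : x ∉ b) :
    blockPerm b x = x :=
  List.formPerm_apply_of_notMem (by rwa [Finset.mem_sort])

lemma blockPerm_apply_mem_of_mem (b : Finset (Fin n)) {x : Fin n} (h : x ∈ b) :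
    blockPerm b x ∈ b := by
  have := List.formPerm_apply_mem_of_mem (l := b.sort (· ≤ ·)) (x := x)
    (by rwa [Finset.mem_sort])
  rwa [Finset.mem_sort] at this

lemma blockPerm_apply_mem {S : Finset (Fin (n + 2))} {x : Fin (n + 2)} (hx : x ∈ S) :
    blockPerm S x = nextIn S ⟨x, hx⟩ (x + 1) := by
  classical
  set l := S.sort (· ≤ ·) with hl
  have hnd : l.Nodup := S.sort_nodup _
  have hxl : x ∈ l := (Finset.mem_sort _).mpr hx
  obtain ⟨i, hi⟩ := List.mem_iff_get.mp hxl
  have hlen : 0 < l.length := i.pos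
  set t : Fin (n + 2) := l.get ⟨(i.val + 1) % l.length, Nat.mod_lt _ hlen⟩ with ht
  have hform : blockPerm S x = t := by
    rw [blockPerm, ← hl, ← hi,
      List.formPerm_apply_mem_eq_next hnd _ (by rw [hi]; exact hxl)]
    exact List.next_getElem l hnd i.val i.isLt
  rw [hform]
  -- strict monotonicity of `l.get`
  have hmono : ∀ {a b : Fin l.length}, a < b → l.get a < l.get b := by
    intro a b hab
    exact S.sortedLT_sort hab
  refine (nextIn_unique _ ?_ ?_).symm
  · rw [← Finset.mem_sort (α := Fin (n+2)) (· ≤ ·)]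
    exact l.get_mem _
  · intro z hz
    obtain ⟨j, hj⟩ := List.mem_iff_get.mp (show z ∈ l from (Finset.mem_sort (α := Fin (n+2)) (· ≤ ·)).mpr hz)
    rw [← hj]
    rcases Nat.lt_or_ge 1 l.length with hlen2 | hlen2
    · -- length ≥ 2
      have hti : ((i.val + 1) % l.length) ≠ i.val := by
        rcases Nat.lt_or_ge (i.val + 1) l.length with h | h
        · rw [Nat.mod_eq_of_lt h]; omega
        · have : i.val + 1 = l.length := by omega
          rw [this, Nat.mod_self]
          omega
      have htx : t ≠ x := by
        rw [← hi]
        intro hc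
        exact hti (Fin.val_congr (List.nodup_iff_injective_get.mp hnd hc))
      rcases eq_or_ne (l.get j) x with hjx | hjx
      · -- z = x : rk is maximal
        rw [hjx, rk_succ x x, if_pos rfl]
        have h1 := rk_lt x t
        have h2 : rk (x + 1) t = rk x t - 1 := by rw [rk_succ, if_neg htx]
        omega
      · have hji : j ≠ i := fun hc => hjx (by rw [hc, hi])
        have hrkt : rk (x + 1) t = rk x t - 1 := by rw [rk_succ, if_neg htx]
        have hrkj : rk (x + 1) (l.get j) = rk x (l.get j) - 1 := by
          rw [rk_succ, if_neg hjx]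
        have htpos : 1 ≤ rk x t := by
          rcases Nat.eq_zero_or_pos (rk x t) with h | h
          · exact absurd (rk_eq_zero_iff.mp h) htx
          · exact h
        have hjpos : 1 ≤ rk x (l.get j) := by
          rcases Nat.eq_zero_or_pos (rk x (l.get j)) with h | h
          · exact absurd (rk_eq_zero_iff.mp h) hjx
          · exact h
        have hmain : rk x t ≤ rk x (l.get j) := by
          rw [rk_val, rk_val]
          have hxv := x.isLt
          have htv := t.isLt
          have hjv := (l.get j).isLt
          rcases Nat.lt_or_ge (i.val + 1) l.length with hcase | hcase
          · -- no wrap : t = l.get (i+1) > x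
            have htdef : t = l.get ⟨i.val + 1, hcase⟩ := by
              rw [ht]; congr 1; exact Fin.ext (Nat.mod_eq_of_lt hcase)
            have hxt : x < t := by
              rw [htdef, ← hi]; exact hmono (by simp [Fin.lt_def])
            rcases Nat.lt_or_ge i.val j.val with hij | hij
            · have : t ≤ l.get j := by
                rcases eq_or_lt_of_le (show i.val + 1 ≤ j.val by omega) with h | h
                · rw [htdef]
                  exact le_of_eq (congrArg l.get (Fin.ext h))
                · rw [htdef]
                  exact le_of_lt (hmono (by simpa [Fin.lt_def] using h))
              have h1 : x.val < t.val := hxt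
              have h2 : t.val ≤ (l.get j).val := this
              rw [if_pos (by omega), if_pos (by omega)]
              omega
            · have hji' : j < i := by
                refine lt_of_le_of_ne (Fin.le_def.mpr hij) hji
              have : l.get j < x := by rw [← hi]; exact hmono hji'
              have h1 : x.val < t.val := hxt
              have h2 : (l.get j).val < x.val := this
              rw [if_pos (by omega), if_neg (by omega)]
              omega
          · -- wrap : t = l.get 0, everything ≤ x
            have hilast : i.val + 1 = l.length := by omega
            have hmod : (i.val + 1) % l.length = 0 := by
              rw [hilast]; exact Nat.mod_self _
            have htdef : t = l.get ⟨0, hlen⟩ := by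
              rw [ht]; congr 1; exact Fin.ext hmod
            have hji' : j < i := by
              refine lt_of_le_of_ne ?_ hji
              have hjlt : j.val < l.length := j.isLt
              exact Fin.le_def.mpr (by omega)
            have hjx' : l.get j < x := by rw [← hi]; exact hmono hji'
            have htj : t ≤ l.get j := by
              rcases Nat.eq_zero_or_pos j.val with h | h
              · rw [htdef]
                exact le_of_eq (congrArg l.get (Fin.ext h.symm))
              · rw [htdef]
                exact le_of_lt (hmono (Fin.lt_def.mpr (show (0:ℕ) < j.val from h)))
            have htx' : t < x := lt_of_le_of_lt htj hjx'
            have h1 : t.val < x.val := htx'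
            have h2 : t.val ≤ (l.get j).val := htj
            have h3 : (l.get j).val < x.val := hjx'
            rw [if_neg (by omega), if_neg (by omega)]
            omega
        omega
    · -- length = 1 : t = x = l.get j
      have h1 : l.length = 1 := by omega
      have hij : i = j := Fin.ext (by omega)
      have hti : t = l.get i := by
        rw [ht]; congr 1; exact Fin.ext (by simp [h1]; omega)
      rw [hti, hij]

lemma core_pointwise {A B F : Finset (Fin (n + 2))} (hdisj : Disjoint A B)
    (hunion : A ∪ B = univ)
    (hF : F = A.filter (fun x => x - 1 ∉ A) ∪ B.filter (fun x => x - 1 ∉ B))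
    {y : Fin (n + 2)} (hy : y ∈ A) :
    blockPerm A y = blockPerm F (y + 1) := by
  classical
  have mem_F : ∀ z : Fin (n + 2), z ∈ F ↔ (z ∈ A ∧ z - 1 ∉ A) ∨ (z ∈ B ∧ z - 1 ∉ B) := by
    intro z
    simp [hF, Finset.mem_union, Finset.mem_filter]
  have hsub : (y + 1) - 1 = y := by ring
  by_cases hc : y + 1 ∈ F
  · -- y + 1 ∈ F, so y + 1 ∈ B
    have hyB1 : y + 1 ∈ B := by
      rcases (mem_F _).mp hc with ⟨h1, h2⟩ | ⟨h1, _⟩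
      · rw [hsub] at h2; exact absurd hy h2
      · exact h1
    set w := nextIn A ⟨y, hy⟩ (y + 1) with hw
    have hwA : w ∈ A := nextIn_mem _ _ _
    have hwmin : ∀ z ∈ A, rk (y + 1) w ≤ rk (y + 1) z := fun z hz => rk_nextIn_le _ _ _ hz
    have hwne : w ≠ y + 1 := fun hc' =>
      Finset.disjoint_left.mp hdisj (hc' ▸ hwA) hyB1
    have hwpos : 1 ≤ rk (y + 1) w := by
      rcases Nat.eq_zero_or_pos (rk (y + 1) w) with h | h
      · exact absurd (rk_eq_zero_iff.mp h) hwne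
      · exact h
    have hw1 : w - 1 ∉ A := by
      intro hcon
      have h1 : rk (y + 1) (w - 1) = rk (y + 1) w - 1 := rk_sub_one hwne
      have h2 := hwmin _ hcon
      omega
    have hwF : w ∈ F := (mem_F _).mpr (Or.inl ⟨hwA, hw1⟩)
    rw [blockPerm_apply_mem hy, blockPerm_apply_mem hc]
    refine (nextIn_unique _ hwF ?_).symm
    intro z hz
    have hrw : rk (y + 1 + 1) w = rk (y + 1) w - 1 := by rw [rk_succ, if_neg hwne]
    rcases eq_or_ne z (y + 1) with rfl | hz1
    · rw [rk_succ (y + 1) (y + 1), if_pos rfl]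
      have := rk_lt (y + 1) w
      omega
    · have hrz : rk (y + 1 + 1) z = rk (y + 1) z - 1 := by rw [rk_succ, if_neg hz1]
      have hzpos : 1 ≤ rk (y + 1) z := by
        rcases Nat.eq_zero_or_pos (rk (y + 1) z) with h | h
        · exact absurd (rk_eq_zero_iff.mp h) hz1
        · exact h
      have hmain : rk (y + 1) w ≤ rk (y + 1) z := by
        by_contra hcon
        push_neg at hcon
        rcases (mem_F _).mp hz with ⟨hzA, _⟩ | ⟨hzB, hzB1⟩
        · exact absurd (hwmin _ hzA) (by omega)
        · have h2 : z - 1 ∈ A := by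
            have hmem : z - 1 ∈ A ∪ B := by rw [hunion]; exact Finset.mem_univ _
            rcases Finset.mem_union.mp hmem with h | h
            · exact h
            · exact absurd h hzB1
          have h3 : rk (y + 1) (z - 1) = rk (y + 1) z - 1 := rk_sub_one hz1
          have h4 := hwmin _ h2
          omega
      omega
  · -- y + 1 ∉ F : both sides are y + 1
    have hyA1 : y + 1 ∈ A := by
      have hmem : y + 1 ∈ A ∪ B := by rw [hunion]; exact Finset.mem_univ _
      rcases Finset.mem_union.mp hmem with h | h
      · exact h
      · exfalso
        have hy1 : (y + 1) - 1 ∈ B := by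
          by_contra hcon
          exact hc ((mem_F _).mpr (Or.inr ⟨h, hcon⟩))
        rw [hsub] at hy1
        exact Finset.disjoint_left.mp hdisj hy hy1
    rw [blockPerm_apply_of_not_mem F hc, blockPerm_apply_mem hy]
    refine nextIn_unique _ hyA1 ?_
    intro z hz
    have : rk (y + 1) (y + 1) = 0 := rk_eq_zero_iff.mpr rfl
    omega

lemma tau_pointwise {A B F : Finset (Fin (n + 2))} (hdisj : Disjoint A B)
    (hunion : A ∪ B = univ)
    (hF : F = A.filter (fun x => x - 1 ∉ A) ∪ B.filter (fun x => x - 1 ∉ B))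
    (y : Fin (n + 2)) :
    blockPerm A (blockPerm B y) = blockPerm F (y + 1) := by
  have hmem : y ∈ A ∪ B := by rw [hunion]; exact Finset.mem_univ _
  rcases Finset.mem_union.mp hmem with hy | hy
  · have hyB : y ∉ B := fun h => Finset.disjoint_left.mp hdisj hy h
    rw [blockPerm_apply_of_not_mem B hyB]
    exact core_pointwise hdisj hunion hF hy
  · have h1 : blockPerm B y ∈ B := blockPerm_apply_mem_of_mem B hy
    have h2 : blockPerm B y ∉ A := fun h => Finset.disjoint_left.mp hdisj h h1
    rw [blockPerm_apply_of_not_mem A h2]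
    exact core_pointwise hdisj.symm (by rw [Finset.union_comm]; exact hunion)
      (by rw [hF, Finset.union_comm]) hy


theorem genus_of_two_block_partition (n p : ℕ) (hn : 2 ≤ n)
    (P : Finpartition (univ : Finset (Fin n))) (C₁ C₂ : Finset (Fin n))
    (hP : P.parts = {C₁, C₂}) (hne : C₁ ≠ C₂)
    (h₁ : C₁.card = p) (h₂ : C₂.card = n - p) :
    2 * ((p : ℤ) - 1 - ((C₁.filter fun x => (finRotate n)⁻¹ x ∈ C₁).card : ℤ)) =
        (n : ℤ) + 1 - (P.parts.card : ℤ) - (partFaces P : ℤ) ∧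
      (partFaces P : ℤ) =
        (n : ℤ) - 1 - 2 * ((p : ℤ) - 1 -
          ((C₁.filter fun x => (finRotate n)⁻¹ x ∈ C₁).card : ℤ)) := by
  classical
  obtain ⟨m, rfl⟩ : ∃ m, n = m + 2 := ⟨n - 2, by omega⟩
  have hC₁P : C₁ ∈ P.parts := by rw [hP]; exact mem_insert_self _ _
  have hC₂P : C₂ ∈ P.parts := by rw [hP]; exact mem_insert_of_mem (mem_singleton_self _)
  have hdisj : Disjoint C₁ C₂ := P.disjoint hC₁P hC₂P hne
  have hunion : C₁ ∪ C₂ = univ := by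
    have h0 := P.sup_parts
    rw [hP] at h0
    simpa using h0
  have hA : C₁.Nonempty := P.nonempty_of_mem_parts hC₁P
  have hB : C₂.Nonempty := P.nonempty_of_mem_parts hC₂P
  set F : Finset (Fin (m + 2)) :=
    C₁.filter (fun x => x - 1 ∉ C₁) ∪ C₂.filter (fun x => x - 1 ∉ C₂) with hF
  have hτ : partPerm P = blockPerm C₁ * blockPerm C₂ := by
    rw [partPerm]
    refine (Finset.noncommProd_congr (g := blockPerm) hP (fun x _ => rfl) _).trans ?_
    refine (Finset.noncommProd_insert_of_notMem {C₂} C₁ blockPerm _ (by simpa using hne)).trans ?_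
    rw [Finset.noncommProd_singleton]
  have hinv : ∀ x : Fin (m + 2), (finRotate (m + 2))⁻¹ x = x - 1 := by
    intro x
    rw [Equiv.Perm.inv_def, Equiv.symm_apply_eq, finRotate_succ_apply]
    ring
  have hkey : partPerm P * (finRotate (m + 2))⁻¹ = blockPerm F := by
    ext x
    have h1 : (partPerm P * (finRotate (m + 2))⁻¹) x
        = partPerm P ((finRotate (m + 2))⁻¹ x) := rfl
    rw [h1, hinv, hτ]
    have h2 := tau_pointwise hdisj hunion hF (x - 1)
    rw [sub_add_cancel] at h2
    exact congrArg Fin.val h2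
  have hu : finRotate (m + 2) * (partPerm P)⁻¹ = (blockPerm F)⁻¹ := by
    rw [← hkey, mul_inv_rev, inv_inv]
  have hs₁eq : (C₁.filter fun x => (finRotate (m + 2))⁻¹ x ∈ C₁)
      = C₁.filter (fun x => x - 1 ∈ C₁) := by
    apply filter_congr
    intro x _
    rw [hinv]
  set s₁ := (C₁.filter (fun x => x - 1 ∈ C₁)).card with hs₁def
  have hs₁p : s₁ ≤ p := h₁ ▸ card_filter_le _ _
  have hc1 : (C₁.filter (fun x => x - 1 ∉ C₁)).card = p - s₁ := by
    have h3 := C₁.card_filter_add_card_filter_not (p := fun x => x - 1 ∈ C₁)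
    omega
  have himg : univ.filter (fun x : Fin (m + 2) => x - 1 ∈ C₁) = C₁.image (· + 1) := by
    ext x
    simp only [mem_filter, mem_univ, true_and, mem_image]
    constructor
    · intro h
      exact ⟨x - 1, h, by ring⟩
    · rintro ⟨z, hz, rfl⟩
      have : z + 1 - 1 = z := by ring
      rwa [this]
  have hcross : (C₂.filter (fun x => x - 1 ∈ C₁)).card = p - s₁ := by
    have h4 : (univ.filter (fun x : Fin (m + 2) => x - 1 ∈ C₁)).card = p := by
      rw [himg, card_image_of_injective _ (add_left_injective 1), h₁]
    have h5 : univ.filter (fun x : Fin (m + 2) => x - 1 ∈ C₁)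
        = C₁.filter (fun x => x - 1 ∈ C₁) ∪ C₂.filter (fun x => x - 1 ∈ C₁) := by
      rw [← filter_union, hunion]
    rw [h5, card_union_of_disjoint (disjoint_filter_filter hdisj)] at h4
    omega
  have hc2 : (C₂.filter (fun x => x - 1 ∉ C₂)).card = p - s₁ := by
    rw [show C₂.filter (fun x => x - 1 ∉ C₂) = C₂.filter (fun x => x - 1 ∈ C₁) from
      filter_congr (fun x hx => by
        constructor
        · intro h
          have hm : x - 1 ∈ C₁ ∪ C₂ := by rw [hunion]; exact mem_univ _
          rcases mem_union.mp hm with h' | h'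
          · exact h'
          · exact absurd h' h
        · intro h h'
          exact Finset.disjoint_left.mp hdisj h h')]
    exact hcross
  have hFcard : F.card = (p - s₁) + (p - s₁) := by
    rw [hF, card_union_of_disjoint (disjoint_filter_filter hdisj), hc1, hc2]
  have hs₁lt : s₁ < p := by
    by_contra hcon
    push_neg at hcon
    have heq : C₁.filter (fun x => x - 1 ∈ C₁) = C₁ :=
      eq_of_subset_of_card_le (filter_subset _ _) (by omega)
    have hall : ∀ x ∈ C₁, x - 1 ∈ C₁ := by
      intro x hx
      have : x ∈ C₁.filter (fun x => x - 1 ∈ C₁) := by rw [heq]; exact hx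
      exact (mem_filter.mp this).2
    obtain ⟨x₀, hx₀⟩ := hA
    have hiter : ∀ k : ℕ, x₀ - (k : Fin (m + 2)) ∈ C₁ := by
      intro k
      induction k with
      | zero => simpa using hx₀
      | succ k ih =>
        have he : x₀ - ((k + 1 : ℕ) : Fin (m + 2)) = (x₀ - (k : ℕ)) - 1 := by
          push_cast
          ring
        rw [he]
        exact hall _ ih
    obtain ⟨y₀, hy₀⟩ := hB
    have hy₁ : y₀ ∈ C₁ := by
      have h5 := hiter ((x₀ - y₀).val)
      rwa [Fin.cast_val_eq_self, sub_sub_cancel] at h5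
    exact Finset.disjoint_left.mp hdisj hy₁ hy₀
  have hF2 : 2 ≤ F.card := by omega
  have hlen : 2 ≤ (F.sort (· ≤ ·)).length := by
    rw [Finset.length_sort]
    exact hF2
  have hcyc : (blockPerm F).IsCycle := List.isCycle_formPerm (F.sort_nodup _) hlen
  have hsupp : (blockPerm F).support = F := by
    rw [blockPerm, List.support_formPerm_of_nodup _ (F.sort_nodup _) ?hx, sort_toFinset]
    case hx =>
      intro x hx
      have h6 := congrArg List.length hx
      simp only [List.length_singleton] at h6
      omega
  have hFn : F.card ≤ m + 2 := by
    have := card_le_univ F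
    simpa using this
  have hface : partFaces P = 1 + ((m + 2) - F.card) := by
    rw [partFaces, hu, cycleCount, Equiv.Perm.cycleType_inv, hcyc.cycleType]
    have h7 : (univ.filter fun x => (blockPerm F)⁻¹ x = x) = univ \ F := by
      ext x
      simp only [mem_filter, mem_univ, true_and, mem_sdiff]
      rw [Equiv.Perm.inv_def, Equiv.symm_apply_eq, eq_comm, ← Equiv.Perm.notMem_support,
        hsupp]
    rw [h7, card_sdiff_of_subset (subset_univ F)]
    simp [hsupp]
  have hparts : P.parts.card = 2 := by
    rw [hP]
    exact card_pair hne
  rw [hs₁eq, ← hs₁def]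
  constructor
  · omega
  · omega
end

section
/- Let p ≥ 1 and g ≥ 0. The number of set partitions of {1,…,2p} into two blocks each of cardinality p whose genus equals g is C(p−1, g)·C(p, g+1), where C(a,b) denotes the binomial coefficient (equal to 0 when b > a). -/
/-!
STATEMENT 4: Let p ≥ 1 and g ≥ 0.  The number of set partitions of {1,…,2p} into two
blocks each of cardinality p whose genus equals g is C(p−1,g)·C(p,g+1).
-/

open Finset

variable {n : ℕ}

/-- The genus of the set partition `P` equals `g`, i.e. `2g = n + 1 - k - f(α)` where
`k` is the number of blocks. -/
def HasGenus (P : Finpartition (univ : Finset (Fin n))) (g : ℕ) : Prop :=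
  n + 1 = P.parts.card + partFaces P + 2 * g

/-- cyclic distance from `x+1` to `w` -/
def cdist {n : ℕ} (x w : Fin n) : ℕ := (w.val + n - x.val - 1) % n

lemma mod2aux (a n : ℕ) (h : a < 2*n) : a % n = if n ≤ a then a - n else a := by
  split_ifs with h'
  · rw [Nat.mod_eq_sub_mod h', Nat.mod_eq_of_lt (by omega)]
  · exact Nat.mod_eq_of_lt (by omega)

lemma cdist_eq {n : ℕ} (x w : Fin n) :
    cdist x w = if x.val < w.val then w.val - x.val - 1 else w.val + n - x.val - 1 := by
  have hx := x.isLt; have hw := w.isLt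
  unfold cdist
  rw [mod2aux _ n (by omega)]
  split_ifs <;> omega

lemma cdist_lt {n : ℕ} (x w : Fin n) : cdist x w < n := by
  have hx := x.isLt; have hw := w.isLt
  rw [cdist_eq]; split_ifs <;> omega

lemma cdist_inj {n : ℕ} {x w w' : Fin n} (h : cdist x w = cdist x w') : w = w' := by
  have hx := x.isLt; have hw := w.isLt; have hw' := w'.isLt
  rw [cdist_eq, cdist_eq] at h
  apply Fin.ext
  split_ifs at h <;> omega

lemma list_cdist_min {n : ℕ} (s : List (Fin n)) (hsort : List.Pairwise (· < ·) s)
    (i : ℕ) (hi : i < s.length) (k : ℕ) (hk : k < s.length) :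
    cdist (s[i]'hi) (s[(i+1) % s.length]'(Nat.mod_lt _ (by omega))) ≤ cdist (s[i]'hi) (s[k]'hk) := by
  have hlt : ∀ (a c : ℕ) (ha : a < s.length) (hc : c < s.length), a < c →
      (s[a]'ha).val < (s[c]'hc).val :=
    fun a c ha hc h => List.pairwise_iff_getElem.1 hsort a c ha hc h
  have hn : 0 < n := (s[i]'hi).pos
  by_cases hc : i + 1 < s.length
  · have hji : (i+1) % s.length = i + 1 := Nat.mod_eq_of_lt hc
    simp only [hji]
    rw [cdist_eq, cdist_eq]
    have h1 : (s[i]'hi).val < (s[i+1]'hc).val := hlt i (i+1) hi hc (by omega)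
    rcases lt_or_ge i k with hik | hki
    · have h2 : (s[i+1]'hc).val ≤ (s[k]'hk).val := by
        rcases eq_or_lt_of_le (show i+1 ≤ k by omega) with h | h
        · exact le_of_eq (by congr)
        · exact le_of_lt (hlt (i+1) k hc hk h)
      rw [if_pos h1, if_pos (by omega)]; omega
    · have h2 : (s[k]'hk).val ≤ (s[i]'hi).val := by
        rcases eq_or_lt_of_le hki with h | h
        · exact le_of_eq (by congr)
        · exact le_of_lt (hlt k i hk hi h)
      have h4 := (s[i+1]'hc).isLt
      rw [if_pos h1, if_neg (by omega)]
      omega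
  · have hji : (i+1) % s.length = 0 := by
      have : i + 1 = s.length := by omega
      rw [this, Nat.mod_self]
    simp only [hji]
    rw [cdist_eq, cdist_eq]
    have h2 : ∀ (c : ℕ) (hc : c < s.length), (s[c]'hc).val ≤ (s[i]'hi).val := by
      intro c hcc
      rcases eq_or_lt_of_le (show c ≤ i by omega) with h | h
      · exact le_of_eq (by congr)
      · exact le_of_lt (hlt c i hcc hi h)
    have h0 : (s[0]'(by omega)).val ≤ (s[k]'hk).val := by
      rcases Nat.eq_zero_or_pos k with h | h
      · subst h; exact le_of_eq rfl
      · exact le_of_lt (hlt 0 k (by omega) hk h)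
    rw [if_neg (by have := h2 0 (by omega); omega), if_neg (by have := h2 k hk; omega)]
    have := (s[k]'hk).isLt
    omega

lemma blockPerm_eq_of_min {n : ℕ} (b : Finset (Fin n)) {x z : Fin n} (hx : x ∈ b) (hz : z ∈ b)
    (hmin : ∀ w ∈ b, cdist x z ≤ cdist x w) : blockPerm b x = z := by
  classical
  have hnd : (b.sort (· ≤ ·)).Nodup := Finset.sort_nodup _ _
  have hsort : List.Pairwise (· < ·) (b.sort (· ≤ ·)) := (Finset.sortedLT_sort b).pairwise
  obtain ⟨i, hi, hxi⟩ := List.mem_iff_getElem.1 ((Finset.mem_sort (α := Fin n) (· ≤ ·)).2 hx)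
  have hjlt : (i+1) % (b.sort (· ≤ ·)).length < (b.sort (· ≤ ·)).length :=
    Nat.mod_lt _ (show 0 < (b.sort (· ≤ ·)).length by omega)
  have hform : blockPerm b x = (b.sort (· ≤ ·))[(i+1) % (b.sort (· ≤ ·)).length]'hjlt := by
    rw [blockPerm, ← hxi, List.formPerm_apply_getElem _ hnd i hi]
  have hz' : (b.sort (· ≤ ·))[(i+1) % (b.sort (· ≤ ·)).length]'hjlt ∈ b :=
    (Finset.mem_sort (α := Fin n) (· ≤ ·)).1 (List.getElem_mem hjlt)
  have hmin' : ∀ w ∈ b, cdist x ((b.sort (· ≤ ·))[(i+1) % (b.sort (· ≤ ·)).length]'hjlt) ≤ cdist x w := by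
    intro w hw
    obtain ⟨k, hk, hwk⟩ := List.mem_iff_getElem.1 ((Finset.mem_sort (α := Fin n) (· ≤ ·)).2 hw)
    rw [← hwk, ← hxi]
    exact list_cdist_min _ hsort i hi k hk
  have heq : cdist x z = cdist x ((b.sort (· ≤ ·))[(i+1) % (b.sort (· ≤ ·)).length]'hjlt) :=
    le_antisymm (hmin _ hz') (hmin' _ hz)
  rw [hform, ← cdist_inj heq]
lemma val_add_one' {n : ℕ} [NeZero n] (x : Fin n) : (x + 1).val = (x.val + 1) % n := by
  rw [Fin.add_def, Fin.val_one']
  conv_rhs => rw [Nat.add_mod, Nat.mod_eq_of_lt x.isLt]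

lemma cdist_self {n : ℕ} (y : Fin n) : cdist y y = n - 1 := by
  have := y.isLt
  unfold cdist
  rw [Nat.mod_eq_of_lt (by omega)]
  omega

lemma cdist_add_one_right {n : ℕ} [NeZero n] (x : Fin n) : cdist x (x + 1) = 0 := by
  have hx := x.isLt
  have h1 := val_add_one' x
  unfold cdist
  rcases Nat.lt_or_ge (x.val + 1) n with h | h
  · rw [h1, Nat.mod_eq_of_lt h]
    have : x.val + 1 + n - x.val - 1 = n := by omega
    rw [this, Nat.mod_self]
  · have hxn : x.val + 1 = n := by omega
    rw [h1, hxn, Nat.mod_self]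
    rw [Nat.mod_eq_of_lt (by omega)]
    omega

lemma cdist_eq_zero_iff {n : ℕ} [NeZero n] {x w : Fin n} : cdist x w = 0 ↔ w = x + 1 :=
  ⟨fun h => cdist_inj (h.trans (cdist_add_one_right x).symm),
   fun h => h ▸ cdist_add_one_right x⟩

lemma cdist_add_one {n : ℕ} [NeZero n] (x w : Fin n) (h : w ≠ x) : cdist x (w + 1) = cdist x w + 1 := by
  have hx := x.isLt; have hw := w.isLt
  have hne : w.val ≠ x.val := fun hc => h (Fin.ext hc)
  have h1 := val_add_one' w
  rw [cdist_eq, cdist_eq]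
  rcases Nat.lt_or_ge (w.val + 1) n with hc | hc
  · rw [h1, Nat.mod_eq_of_lt hc]
    split_ifs <;> omega
  · have hwn : w.val + 1 = n := by omega
    rw [h1, hwn, Nat.mod_self]
    split_ifs <;> omega

lemma cdist_succ_left {n : ℕ} [NeZero n] (x w : Fin n) (h : w ≠ x + 1) : cdist x w = cdist (x+1) w + 1 := by
  have hx := x.isLt; have hw := w.isLt
  have h1 := val_add_one' x
  have hne : w.val ≠ (x+1).val := fun hc => h (Fin.ext hc)
  rw [cdist_eq, cdist_eq]
  rcases Nat.lt_or_ge (x.val + 1) n with hc | hc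
  · rw [h1, Nat.mod_eq_of_lt hc] at hne ⊢
    split_ifs <;> omega
  · have hxn : x.val + 1 = n := by omega
    rw [h1, hxn, Nat.mod_self] at hne ⊢
    split_ifs <;> omega

/-- The set of positions where the block changes. -/
def chgSet {n : ℕ} [NeZero n] (A : Finset (Fin n)) : Finset (Fin n) :=
  univ.filter (fun w => ¬(w + 1 ∈ A ↔ w ∈ A))

/-- The set of boundary points (starts of runs). -/
def bndSet {n : ℕ} [NeZero n] (A : Finset (Fin n)) : Finset (Fin n) :=
  (chgSet A).image (· + 1)

lemma mem_bndSet {n : ℕ} [NeZero n] {A : Finset (Fin n)} {y : Fin n} :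
    y ∈ bndSet A ↔ ∃ w : Fin n, ¬(w + 1 ∈ A ↔ w ∈ A) ∧ w + 1 = y := by
  rw [bndSet, Finset.mem_image]
  constructor
  · rintro ⟨w, hw, hwy⟩
    exact ⟨w, (Finset.mem_filter.1 hw).2, hwy⟩
  · rintro ⟨w, hw, hwy⟩
    exact ⟨w, Finset.mem_filter.2 ⟨Finset.mem_univ _, hw⟩, hwy⟩

lemma blockPerm_step {n : ℕ} [NeZero n] (A b : Finset (Fin n))
    (hb : ∀ w : Fin n, (w + 1 ∈ b ↔ w ∈ b) ↔ (w + 1 ∈ A ↔ w ∈ A))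
    {x : Fin n} (hx : x ∈ b) :
    blockPerm b x = blockPerm (bndSet A) (x + 1) := by
  classical
  by_cases hx1 : x + 1 ∈ b
  · rw [blockPerm_eq_of_min b hx hx1
      (fun w hw => by rw [cdist_add_one_right]; exact Nat.zero_le _)]
    have hns : x + 1 ∉ bndSet A := by
      rw [mem_bndSet]
      rintro ⟨w, hw, hw1⟩
      have : w = x := by
        have := add_right_cancel hw1
        exact this
      subst this
      exact hw ((hb w).1 (iff_of_true hx1 hx))
    rw [blockPerm, List.formPerm_apply_of_notMem]
    rw [Finset.mem_sort]
    exact hns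
  · have hbne : (b.image (cdist x)).Nonempty := ⟨cdist x x, Finset.mem_image_of_mem _ hx⟩
    obtain ⟨z, hzb, hzd⟩ := Finset.mem_image.1 ((b.image (cdist x)).min'_mem hbne)
    have hmin : ∀ w ∈ b, cdist x z ≤ cdist x w := fun w hw => by
      rw [hzd]; exact Finset.min'_le _ _ (Finset.mem_image_of_mem _ hw)
    have hzx1 : z ≠ x + 1 := fun h => hx1 (h ▸ hzb)
    have hd1 : cdist x z ≠ 0 := fun h => hzx1 (cdist_eq_zero_iff.1 h)
    have hyz : (z - 1) + 1 = z := sub_add_cancel z 1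
    have hynb : z - 1 ∉ b := by
      intro hy
      have hyx : z - 1 ≠ x := fun h => hzx1 (by rw [← hyz, h])
      have h2 : cdist x ((z-1) + 1) = cdist x (z-1) + 1 := cdist_add_one x _ hyx
      rw [hyz] at h2
      have := hmin _ hy
      omega
    have hzS : z ∈ bndSet A := by
      rw [mem_bndSet]
      refine ⟨z - 1, ?_, hyz⟩
      rw [← hb]
      rw [hyz]
      exact fun h => hynb (h.1 hzb)
    have hx1S : x + 1 ∈ bndSet A := by
      rw [mem_bndSet]
      exact ⟨x, by rw [← hb]; exact fun h => hx1 (h.2 hx), rfl⟩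
    rw [blockPerm_eq_of_min b hx hzb hmin]
    symm
    apply blockPerm_eq_of_min _ hx1S hzS
    intro w hwS
    have hrel : cdist x z = cdist (x+1) z + 1 := cdist_succ_left x z hzx1
    by_cases hwx : w = x + 1
    · subst hwx
      rw [cdist_self]
      have := cdist_lt x z
      omega
    · obtain ⟨u, hu, huw⟩ := mem_bndSet.1 hwS
      have hub' : ¬(u + 1 ∈ b ↔ u ∈ b) := by rw [hb]; exact hu
      have hw_rel : cdist x w = cdist (x+1) w + 1 := cdist_succ_left x w hwx
      by_cases hwb : w ∈ b
      · have := hmin w hwb; omega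
      · have hub : u ∈ b := by
          by_contra hc
          exact hub' (iff_of_false (huw ▸ hwb) hc)
        have hux : u ≠ x := fun h => hwx (by rw [← huw, h])
        have h3 : cdist x w = cdist x u + 1 := by rw [← huw]; exact cdist_add_one x u hux
        have := hmin u hub
        omega
lemma blockPerm_mem {n : ℕ} {b : Finset (Fin n)} {x : Fin n} (hx : x ∈ b) :
    blockPerm b x ∈ b := by
  rw [blockPerm]
  rw [← Finset.mem_sort (α := Fin n) (· ≤ ·)] at hx ⊢
  exact List.formPerm_apply_mem_of_mem hx

lemma blockPerm_not_mem {n : ℕ} {b : Finset (Fin n)} {x : Fin n} (hx : x ∉ b) :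
    blockPerm b x = x := by
  rw [blockPerm]
  apply List.formPerm_apply_of_notMem
  rw [Finset.mem_sort]
  exact hx

lemma compl_nonempty_of_ne_univ {n : ℕ} {A : Finset (Fin n)} (h : A ≠ univ) :
    (Aᶜ : Finset (Fin n)).Nonempty := by
  rw [Finset.nonempty_iff_ne_empty, Ne, Finset.compl_eq_empty_iff]
  exact h

lemma partPerm_pair {n : ℕ} (P : Finpartition (univ : Finset (Fin n))) {C₁ C₂ : Finset (Fin n)}
    (h : P.parts = {C₁, C₂}) (hne : C₁ ≠ C₂) :
    partPerm P = blockPerm C₁ * blockPerm C₂ := by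
  classical
  rw [partPerm]
  refine (Finset.noncommProd_congr h (fun x _ => rfl) _).trans ?_
  refine (Finset.noncommProd_insert_of_notMem _ _ _ _ (by simp [hne])).trans ?_
  rw [Finset.noncommProd_singleton]

open Fin.NatCast Fin.CommRing in
lemma exists_change {n : ℕ} [NeZero n] {A : Finset (Fin n)} (hne : A.Nonempty)
    (hnu : A ≠ univ) : ∃ x, x ∈ A ∧ x + 1 ∉ A := by
  by_contra hc
  push_neg at hc
  obtain ⟨a, ha⟩ := hne
  have key : ∀ k : ℕ, a + (k : Fin n) ∈ A := by
    intro k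
    induction k with
    | zero => simpa using ha
    | succ m ih =>
        have : ((m+1 : ℕ) : Fin n) = (m : Fin n) + 1 := by push_cast; ring
        rw [this, ← add_assoc]
        exact hc _ ih
  apply hnu
  ext y
  simp only [Finset.mem_univ, iff_true]
  have := key (y - a).val
  rwa [Fin.cast_val_eq_self, add_comm, sub_add_cancel] at this

lemma two_le_chg {n : ℕ} [NeZero n] {A : Finset (Fin n)} (hne : A.Nonempty)
    (hnu : A ≠ univ) : 2 ≤ (chgSet A).card := by
  classical
  obtain ⟨x₁, hx₁, hx₁'⟩ := exists_change hne hnu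
  have hcne : (Aᶜ : Finset (Fin n)).Nonempty := compl_nonempty_of_ne_univ hnu
  have hcnu : (Aᶜ : Finset (Fin n)) ≠ univ := by
    intro h
    obtain ⟨a, ha⟩ := hne
    have : a ∈ (Aᶜ : Finset (Fin n)) := h ▸ Finset.mem_univ a
    exact (Finset.mem_compl.1 this) ha
  obtain ⟨x₂, hx₂, hx₂'⟩ := exists_change hcne hcnu
  rw [Finset.mem_compl] at hx₂
  rw [Finset.mem_compl, not_not] at hx₂'
  have hmem₁ : x₁ ∈ chgSet A := by
    rw [chgSet, Finset.mem_filter]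
    exact ⟨Finset.mem_univ _, fun h => hx₁' (h.2 hx₁)⟩
  have hmem₂ : x₂ ∈ chgSet A := by
    rw [chgSet, Finset.mem_filter]
    exact ⟨Finset.mem_univ _, fun h => hx₂ (h.1 hx₂')⟩
  have hne12 : x₁ ≠ x₂ := fun h => hx₂ (h ▸ hx₁)
  calc 2 = ({x₁, x₂} : Finset (Fin n)).card := (Finset.card_pair hne12).symm
    _ ≤ (chgSet A).card := Finset.card_le_card (by
        intro w hw
        rcases Finset.mem_insert.1 hw with h | h
        · exact h ▸ hmem₁
        · exact (Finset.mem_singleton.1 h) ▸ hmem₂)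

lemma card_bndSet {n : ℕ} [NeZero n] (A : Finset (Fin n)) :
    (bndSet A).card = (chgSet A).card :=
  Finset.card_image_of_injective _ (add_left_injective 1)

lemma partPerm_eq_bnd_mul_rotate {n : ℕ} [NeZero n] (P : Finpartition (univ : Finset (Fin n)))
    {A : Finset (Fin n)} (hparts : P.parts = {A, Aᶜ}) (hne : A ≠ Aᶜ) :
    partPerm P = blockPerm (bndSet A) * finRotate n := by
  classical
  obtain ⟨m, rfl⟩ := Nat.exists_eq_succ_of_ne_zero (NeZero.ne n)
  rw [partPerm_pair P hparts hne]
  apply Equiv.ext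
  intro x
  rw [Equiv.Perm.mul_apply, Equiv.Perm.mul_apply, finRotate_succ_apply]
  by_cases hx : x ∈ A
  · have h1 : blockPerm Aᶜ x = x :=
      blockPerm_not_mem (by rw [Finset.mem_compl, not_not]; exact hx)
    rw [h1]
    exact blockPerm_step A A (fun w => Iff.rfl) hx
  · have hx' : x ∈ (Aᶜ : Finset (Fin (m+1))) := Finset.mem_compl.2 hx
    have hz : blockPerm Aᶜ x ∈ (Aᶜ : Finset (Fin (m+1))) := blockPerm_mem hx'
    have h1 : blockPerm A (blockPerm Aᶜ x) = blockPerm Aᶜ x :=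
      blockPerm_not_mem (Finset.mem_compl.1 hz)
    rw [h1]
    exact blockPerm_step A Aᶜ (fun w => by simp only [Finset.mem_compl]; tauto) hx'

lemma partFaces_pair {n : ℕ} [NeZero n] (P : Finpartition (univ : Finset (Fin n)))
    {A : Finset (Fin n)} (hparts : P.parts = {A, Aᶜ}) (h0 : A.Nonempty) (hA : A ≠ univ) :
    partFaces P + (chgSet A).card = n + 1 := by
  classical
  obtain ⟨m, rfl⟩ := Nat.exists_eq_succ_of_ne_zero (NeZero.ne n)
  have hne : A ≠ Aᶜ := by
    intro h
    obtain ⟨a, ha⟩ := h0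
    exact (Finset.mem_compl.1 (h ▸ ha)) ha
  have hτ := partPerm_eq_bnd_mul_rotate P hparts hne
  have hid : finRotate (m+1) * (partPerm P)⁻¹ = (blockPerm (bndSet A))⁻¹ := by
    rw [hτ, mul_inv_rev, mul_inv_cancel_left]
  rw [partFaces, hid]
  -- now compute cycleCount of the inverse of the cycle on bndSet A
  set S := bndSet A with hS
  have hcard : S.card = (chgSet A).card := card_bndSet A
  have h2 : 2 ≤ S.card := hcard ▸ two_le_chg h0 hA
  have hnd : (S.sort (· ≤ ·)).Nodup := Finset.sort_nodup _ _
  have hlen : (S.sort (· ≤ ·)).length = S.card := Finset.length_sort _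
  have hcyc : (blockPerm S).IsCycle := by
    rw [blockPerm]
    exact List.isCycle_formPerm hnd (by rw [hlen]; exact h2)
  have hsupp : (blockPerm S).support = S := by
    rw [blockPerm]
    rw [List.support_formPerm_of_nodup _ hnd (by
      intro x hx
      have := hlen
      rw [hx] at this
      simp at this
      omega)]
    exact Finset.sort_toFinset _ _
  have hct : ((blockPerm S)⁻¹).cycleType.card = 1 := by
    rw [Equiv.Perm.cycleType_inv, hcyc.cycleType]
    simp
  have hfix : (univ.filter fun x => (blockPerm S)⁻¹ x = x) = univ \ S := by
    ext x
    simp only [Finset.mem_filter, Finset.mem_univ, true_and, Finset.mem_sdiff]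
    rw [← Equiv.Perm.notMem_support, Equiv.Perm.support_inv, hsupp]
  have hSle : S.card ≤ m + 1 := by
    calc S.card ≤ (univ : Finset (Fin (m+1))).card := Finset.card_le_card (Finset.subset_univ _)
      _ = m + 1 := by rw [Finset.card_univ, Fintype.card_fin]

  rw [cycleCount, hct, hfix, Finset.card_sdiff_of_subset (Finset.subset_univ _), Finset.card_univ,
    Fintype.card_fin, ← hcard]
  omega
def pairPartition {n : ℕ} (A : Finset (Fin n)) (h1 : A.Nonempty) (h2 : (Aᶜ : Finset (Fin n)).Nonempty) :
    Finpartition (univ : Finset (Fin n)) where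
  parts := {A, Aᶜ}
  supIndep := by
    have hne : A ≠ Aᶜ := by
      intro h
      obtain ⟨a, ha⟩ := h1
      exact (Finset.mem_compl.1 (h ▸ ha)) ha
    rw [Finset.supIndep_pair hne]
    exact disjoint_compl_right
  sup_parts := by
    rw [Finset.sup_insert, Finset.sup_singleton, id_eq, id_eq, sup_eq_union, Finset.union_compl]
  bot_notMem := by
    simp only [Finset.bot_eq_empty, Finset.mem_insert, Finset.mem_singleton]
    push_neg
    exact ⟨Ne.symm h1.ne_empty, Ne.symm h2.ne_empty⟩

lemma pairPartition_parts {n : ℕ} (A : Finset (Fin n)) (h1 : A.Nonempty)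
    (h2 : (Aᶜ : Finset (Fin n)).Nonempty) : (pairPartition A h1 h2).parts = {A, Aᶜ} := rfl

lemma hasGenus_iff_pair {n : ℕ} [NeZero n] (P : Finpartition (univ : Finset (Fin n)))
    {A : Finset (Fin n)} (hparts : P.parts = {A, Aᶜ}) (h0 : A.Nonempty) (hA : A ≠ univ) (g : ℕ) :
    HasGenus P g ↔ (chgSet A).card = 2*g + 2 := by
  have hfp := partFaces_pair P hparts h0 hA
  have h2c := two_le_chg h0 hA
  have hne : A ≠ Aᶜ := by
    intro h
    obtain ⟨a, ha⟩ := h0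
    exact (Finset.mem_compl.1 (h ▸ ha)) ha
  have hcard : P.parts.card = 2 := by
    rw [hparts]; exact Finset.card_pair hne
  rw [HasGenus, hcard]
  omega

lemma part_zero_spec {p : ℕ} [NeZero (2*p)] (hp : 1 ≤ p) (P : Finpartition (univ : Finset (Fin (2*p))))
    (C₁ C₂ : Finset (Fin (2*p))) (hparts : P.parts = {C₁, C₂}) (hne : C₁ ≠ C₂)
    (hc₁ : C₁.card = p) (hc₂ : C₂.card = p) :
    P.parts = {P.part 0, (P.part 0)ᶜ} ∧ (P.part 0).card = p ∧ (0 : Fin (2*p)) ∈ P.part 0 := by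
  classical
  have h0u : (0 : Fin (2*p)) ∈ (univ : Finset (Fin (2*p))) := Finset.mem_univ _
  have hmem0 : (0 : Fin (2*p)) ∈ P.part 0 := P.mem_part h0u
  have hptmem : P.part 0 ∈ P.parts := P.part_mem.2 h0u
  have hm₁ : C₁ ∈ P.parts := by rw [hparts]; exact Finset.mem_insert_self _ _
  have hm₂ : C₂ ∈ P.parts := by
    rw [hparts]; exact Finset.mem_insert_of_mem (Finset.mem_singleton_self _)
  have hdisj : Disjoint C₁ C₂ := P.disjoint hm₁ hm₂ hne
  have hcompl : C₂ = C₁ᶜ := by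
    apply Finset.eq_of_subset_of_card_le
    · intro x hx
      exact Finset.mem_compl.2 (Finset.disjoint_right.1 hdisj hx)
    · rw [Finset.card_compl, Fintype.card_fin, hc₁, hc₂]
      omega
  subst hcompl
  rw [hparts] at hptmem
  rcases Finset.mem_insert.1 hptmem with h | h
  · rw [h]
    exact ⟨hparts, hc₁, h ▸ hmem0⟩
  · rw [Finset.mem_singleton.1 h]
    refine ⟨?_, ?_, (Finset.mem_singleton.1 h) ▸ hmem0⟩
    · rw [compl_compl, hparts]
      exact Finset.pair_comm _ _
    · rw [Finset.card_compl, Fintype.card_fin, hc₁]; omega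

lemma card_parts_eq_card_sets (p g : ℕ) [NeZero (2*p)] (hp : 1 ≤ p) :
    Nat.card {P : Finpartition (univ : Finset (Fin (2 * p))) //
        (∃ C₁ C₂ : Finset (Fin (2 * p)), P.parts = {C₁, C₂} ∧ C₁ ≠ C₂ ∧
          C₁.card = p ∧ C₂.card = p) ∧ HasGenus P g} =
    Nat.card {A : Finset (Fin (2 * p)) //
        0 ∈ A ∧ A.card = p ∧ (chgSet A).card = 2*g+2} := by
  classical
  apply Nat.card_congr
  have hQtoP : ∀ A : Finset (Fin (2*p)), 0 ∈ A → A.card = p →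
      A.Nonempty ∧ (Aᶜ : Finset (Fin (2*p))).Nonempty ∧ A ≠ univ ∧ (Aᶜ : Finset (Fin (2*p))).card = p := by
    intro A h0 hcA
    have hcc : (Aᶜ : Finset (Fin (2*p))).card = p := by
      rw [Finset.card_compl, Fintype.card_fin, hcA]; omega
    refine ⟨⟨0, h0⟩, ?_, ?_, hcc⟩
    · rw [← Finset.card_pos, hcc]; omega
    · intro h
      rw [h, Finset.card_univ, Fintype.card_fin] at hcA
      omega
  refine
    { toFun := fun P => ⟨P.1.part 0, ?_⟩
      invFun := fun A =>
        ⟨pairPartition A.1 ⟨0, A.2.1⟩ (hQtoP A.1 A.2.1 A.2.2.1).2.1, ?_⟩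
      left_inv := ?_
      right_inv := ?_ }
  · -- forward property
    obtain ⟨⟨C₁, C₂, hparts, hne, hc₁, hc₂⟩, hgen⟩ := P.2
    obtain ⟨hps, hcard, h0⟩ := part_zero_spec hp P.1 C₁ C₂ hparts hne hc₁ hc₂
    have hAne : (P.1.part 0).Nonempty := ⟨0, h0⟩
    have hAnu : P.1.part 0 ≠ univ := by
      intro h
      rw [h, Finset.card_univ, Fintype.card_fin] at hcard
      omega
    exact ⟨h0, hcard, (hasGenus_iff_pair P.1 hps hAne hAnu g).1 hgen⟩
  · -- backward property
    obtain ⟨h0, hcA, hchg⟩ := A.2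
    obtain ⟨hA1, hA2, hA3, hA4⟩ := hQtoP A.1 h0 hcA
    refine ⟨⟨A.1, (A.1)ᶜ, rfl, ?_, hcA, hA4⟩, ?_⟩
    · intro h
      exact (Finset.mem_compl.1 (h ▸ h0)) h0
    · exact (hasGenus_iff_pair _ rfl ⟨0, h0⟩ hA3 g).2 hchg
  · -- left inverse
    rintro ⟨P, ⟨⟨C₁, C₂, hparts, hne, hc₁, hc₂⟩, hgen⟩⟩
    apply Subtype.ext
    apply Finpartition.ext
    obtain ⟨hps, hcard, h0⟩ := part_zero_spec hp P C₁ C₂ hparts hne hc₁ hc₂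
    exact hps.symm
  · -- right inverse
    rintro ⟨A, hA⟩
    apply Subtype.ext
    simp only
    have h0 : (0 : Fin (2*p)) ∈ A := hA.1
    have hmem : (pairPartition A ⟨0, h0⟩ (hQtoP A hA.1 hA.2.1).2.1).part 0 ∈
        ({A, Aᶜ} : Finset (Finset (Fin (2*p)))) := by
      rw [← pairPartition_parts A ⟨0, h0⟩ (hQtoP A hA.1 hA.2.1).2.1]
      exact (Finpartition.part_mem _).2 (Finset.mem_univ _)
    have h0m : (0 : Fin (2*p)) ∈ (pairPartition A ⟨0, h0⟩ (hQtoP A hA.1 hA.2.1).2.1).part 0 :=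
      Finpartition.mem_part _ (Finset.mem_univ _)
    rcases Finset.mem_insert.1 hmem with h | h
    · exact h
    · rw [Finset.mem_singleton.1 h] at h0m
      exact absurd h0 (Finset.mem_compl.1 h0m)
section Counting

variable {n : ℕ}

/-- rank of `x` in `A`: number of elements of `A` smaller than `x`. -/
def rnk (A : Finset (Fin n)) (x : Fin n) : ℕ := (A.filter (· < x)).card

def DDA [NeZero n] (A : Finset (Fin n)) : Finset (Fin n) := A.filter (fun x => x + 1 ∉ A)

def DDB [NeZero n] (A : Finset (Fin n)) : Finset (Fin n) := Aᶜ.filter (fun x => x + 1 ∈ A)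

lemma rnk_lt_rnk {A : Finset (Fin n)} {x y : Fin n} (hx : x ∈ A) (hxy : x < y) :
    rnk A x < rnk A y := by
  apply Finset.card_lt_card
  have hsub : A.filter (· < x) ⊆ A.filter (· < y) := by
    intro w hw
    obtain ⟨h1, h2⟩ := Finset.mem_filter.1 hw
    exact Finset.mem_filter.2 ⟨h1, lt_trans h2 hxy⟩
  rw [Finset.ssubset_iff_of_subset hsub]
  exact ⟨x, Finset.mem_filter.2 ⟨hx, hxy⟩, fun hc => lt_irrefl x (Finset.mem_filter.1 hc).2⟩

lemma rnk_injOn {A : Finset (Fin n)} {x y : Fin n} (hx : x ∈ A) (hy : y ∈ A)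
    (h : rnk A x = rnk A y) : x = y := by
  rcases lt_trichotomy x y with hc | hc | hc
  · exact absurd h (Nat.ne_of_lt (rnk_lt_rnk hx hc))
  · exact hc
  · exact absurd h.symm (Nat.ne_of_lt (rnk_lt_rnk hy hc))

lemma rnk_lt_card {A : Finset (Fin n)} {x : Fin n} (hx : x ∈ A) : rnk A x < A.card := by
  have hsub : A.filter (· < x) ⊆ A.erase x := by
    intro w hw
    obtain ⟨h1, h2⟩ := Finset.mem_filter.1 hw
    exact Finset.mem_erase.2 ⟨ne_of_lt h2, h1⟩
  calc rnk A x ≤ (A.erase x).card := Finset.card_le_card hsub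
    _ = A.card - 1 := Finset.card_erase_of_mem hx
    _ < A.card := by
        have : 0 < A.card := Finset.card_pos.2 ⟨x, hx⟩
        omega

lemma rnk_max {A : Finset (Fin n)} {x : Fin n} (hx : x ∈ A) (hmax : ∀ w ∈ A, w ≤ x) :
    rnk A x = A.card - 1 := by
  have : A.filter (· < x) = A.erase x := by
    ext w
    rw [Finset.mem_filter, Finset.mem_erase]
    constructor
    · rintro ⟨h1, h2⟩; exact ⟨ne_of_lt h2, h1⟩
    · rintro ⟨h1, h2⟩; exact ⟨h2, lt_of_le_of_ne (hmax w h2) h1⟩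
  rw [rnk, this, Finset.card_erase_of_mem hx]

lemma max_compl_mem_DDB [NeZero n] {A : Finset (Fin n)} (h0 : (0 : Fin n) ∈ A)
    (hc : (Aᶜ : Finset (Fin n)).Nonempty) : (Aᶜ : Finset (Fin n)).max' hc ∈ DDB A := by
  set x := (Aᶜ : Finset (Fin n)).max' hc with hx
  have hxm : x ∈ (Aᶜ : Finset (Fin n)) := Finset.max'_mem _ _
  rw [DDB, Finset.mem_filter]
  refine ⟨hxm, ?_⟩
  have hv := val_add_one' x
  rcases Nat.lt_or_ge (x.val + 1) n with hlt | hge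
  · -- x+1 has value x.val + 1; it can't be in Aᶜ since x is max
    by_contra hna
    have hmem : x + 1 ∈ (Aᶜ : Finset (Fin n)) := Finset.mem_compl.2 hna
    have hle : x + 1 ≤ x := Finset.le_max' _ _ hmem
    rw [Fin.le_def] at hle
    rw [Nat.mod_eq_of_lt hlt] at hv
    omega
  · -- x is the last element, x+1 = 0 ∈ A
    have hx1 : x + 1 = 0 := by
      apply Fin.ext
      rw [hv]
      have := x.isLt
      have hxn : x.val + 1 = n := by omega
      rw [hxn, Nat.mod_self, Fin.val_zero]
    rw [hx1]
    exact h0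

lemma card_DDA_eq_card_DDB [NeZero n] (A : Finset (Fin n)) : (DDA A).card = (DDB A).card := by
  classical
  have h1 : (A.filter (fun x => x + 1 ∈ A)).card + (A.filter (fun x => ¬ (x + 1 ∈ A))).card
      = A.card := Finset.card_filter_add_card_filter_not _
  have h2 : (univ.filter (fun x : Fin n => x + 1 ∈ A)).card = A.card := by
    apply Finset.card_bij (fun x _ => x + 1)
    · intro a ha; exact (Finset.mem_filter.1 ha).2
    · intro a ha b hb hab; exact add_right_cancel hab
    · intro b hb
      refine ⟨b - 1, Finset.mem_filter.2 ⟨Finset.mem_univ _, ?_⟩, sub_add_cancel b 1⟩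
      rw [sub_add_cancel]
      exact hb
  have h3 : univ.filter (fun x : Fin n => x + 1 ∈ A)
      = A.filter (fun x => x + 1 ∈ A) ∪ DDB A := by
    ext x
    rw [Finset.mem_filter, Finset.mem_union, Finset.mem_filter, DDB, Finset.mem_filter,
      Finset.mem_compl]
    by_cases hx : x ∈ A <;> simp [hx]
  have h4 : Disjoint (A.filter (fun x => x + 1 ∈ A)) (DDB A) := by
    rw [Finset.disjoint_left]
    intro x hx hx'
    rw [DDB, Finset.mem_filter, Finset.mem_compl] at hx'
    exact hx'.1 (Finset.mem_filter.1 hx).1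
  have h5 := Finset.card_union_of_disjoint h4
  rw [← h3, h2] at h5
  rw [DDA]
  omega

lemma card_chgSet_eq [NeZero n] (A : Finset (Fin n)) :
    (chgSet A).card = (DDA A).card + (DDB A).card := by
  classical
  have h3 : chgSet A = DDA A ∪ DDB A := by
    ext x
    rw [chgSet, Finset.mem_filter, Finset.mem_union, DDA, Finset.mem_filter, DDB,
      Finset.mem_filter, Finset.mem_compl]
    by_cases hx : x ∈ A <;> by_cases hx1 : x + 1 ∈ A <;> simp [hx, hx1]
  have h4 : Disjoint (DDA A) (DDB A) := by
    rw [Finset.disjoint_left]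
    intro x hx hx'
    rw [DDB, Finset.mem_filter, Finset.mem_compl] at hx'
    exact hx'.1 (Finset.mem_filter.1 hx).1
  rw [h3, Finset.card_union_of_disjoint h4]

end Counting
section Counting2

variable {n : ℕ} [NeZero n]

def YY (A : Finset (Fin n)) : Finset ℕ := (DDA A).image (rnk A)

def XX (A : Finset (Fin n)) : Finset ℕ := ((DDB A).image (rnk Aᶜ)) \ {Aᶜ.card - 1}

lemma mem_YY_iff {A : Finset (Fin n)} {y : Fin n} (hy : y ∈ A) :
    rnk A y ∈ YY A ↔ y ∈ DDA A := by
  rw [YY]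
  constructor
  · intro h
    obtain ⟨u, hu, huy⟩ := Finset.mem_image.1 h
    have : u = y := rnk_injOn (Finset.mem_filter.1 hu).1 hy huy
    exact this ▸ hu
  · exact fun h => Finset.mem_image_of_mem _ h

lemma mem_imageB_iff {A : Finset (Fin n)} {y : Fin n} (hy : y ∈ (Aᶜ : Finset (Fin n))) :
    rnk Aᶜ y ∈ (DDB A).image (rnk Aᶜ) ↔ y ∈ DDB A := by
  constructor
  · intro h
    obtain ⟨u, hu, huy⟩ := Finset.mem_image.1 h
    have : u = y := rnk_injOn (Finset.mem_filter.1 hu).1 hy huy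
    exact this ▸ hu
  · exact fun h => Finset.mem_image_of_mem _ h

lemma mem_DDB_char {A : Finset (Fin n)} (h0 : (0 : Fin n) ∈ A)
    (hc : (Aᶜ : Finset (Fin n)).Nonempty) {y : Fin n} (hy : y ∈ (Aᶜ : Finset (Fin n))) :
    y ∈ DDB A ↔ (rnk Aᶜ y ∈ XX A ∨ rnk Aᶜ y = Aᶜ.card - 1) := by
  constructor
  · intro h
    by_cases hr : rnk Aᶜ y = Aᶜ.card - 1
    · exact Or.inr hr
    · exact Or.inl (Finset.mem_sdiff.2 ⟨(mem_imageB_iff hy).2 h, by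
        rw [Finset.mem_singleton]; exact hr⟩)
  · rintro (h | h)
    · exact (mem_imageB_iff hy).1 (Finset.mem_sdiff.1 h).1
    · have hmax : rnk Aᶜ ((Aᶜ : Finset (Fin n)).max' hc) = Aᶜ.card - 1 :=
        rnk_max (Finset.max'_mem _ _) (fun w hw => Finset.le_max' _ _ hw)
      have : y = (Aᶜ : Finset (Fin n)).max' hc :=
        rnk_injOn hy (Finset.max'_mem _ _) (h.trans hmax.symm)
      exact this ▸ max_compl_mem_DDB h0 hc

lemma rnk_congr {A A' : Finset (Fin n)} {y : Fin n}
    (h : ∀ w : Fin n, w.val < y.val → (w ∈ A ↔ w ∈ A')) : rnk A y = rnk A' y := by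
  rw [rnk, rnk]
  congr 1
  ext w
  rw [Finset.mem_filter, Finset.mem_filter]
  by_cases hw : w < y
  · rw [Fin.lt_def] at hw
    simp only [h w hw]
  · simp only [hw, and_false]

lemma Phi_injective {A A' : Finset (Fin n)} (h0 : (0 : Fin n) ∈ A) (h0' : (0 : Fin n) ∈ A')
    (hcc : (Aᶜ : Finset (Fin n)).card = (A'ᶜ : Finset (Fin n)).card)
    (hne : (Aᶜ : Finset (Fin n)).Nonempty) (hne' : (A'ᶜ : Finset (Fin n)).Nonempty)
    (hX : XX A = XX A') (hY : YY A = YY A') : A = A' := by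
  have key : ∀ k : ℕ, ∀ x : Fin n, x.val ≤ k → (x ∈ A ↔ x ∈ A') := by
    intro k
    induction k with
    | zero =>
        intro x hx
        have hx0 : x = 0 := Fin.ext (by simpa using hx)
        rw [hx0]
        exact iff_of_true h0 h0'
    | succ k ih =>
        intro x hx
        rcases Nat.lt_or_ge x.val (k+1) with hlt | hge
        · exact ih x (by omega)
        · have hxk : x.val = k + 1 := by omega
          have hkn : k < n := by have := x.isLt; omega
          set y : Fin n := ⟨k, hkn⟩ with hy'
          have hxy : y + 1 = x := by
            apply Fin.ext
            rw [val_add_one']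
            have : y.val = k := rfl
            rw [this, Nat.mod_eq_of_lt (by have := x.isLt; omega), hxk]
          have ihy : ∀ w : Fin n, w.val < y.val → (w ∈ A ↔ w ∈ A') := by
            intro w hw
            exact ih w (by have : y.val = k := rfl; omega)
          have ihy' : ∀ w : Fin n, w.val < y.val → (w ∈ (Aᶜ : Finset (Fin n)) ↔ w ∈ (A'ᶜ : Finset (Fin n))) := by
            intro w hw
            rw [Finset.mem_compl, Finset.mem_compl]
            exact not_congr (ihy w hw)
          have hrA : rnk A y = rnk A' y := rnk_congr ihy
          have hrB : rnk Aᶜ y = rnk A'ᶜ y := rnk_congr ihy'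
          have hyy : y.val ≤ k := le_of_eq rfl
          by_cases hy : y ∈ A
          · have hy2 : y ∈ A' := (ih y hyy).1 hy
            have c1 : x ∈ A ↔ y ∉ DDA A := by
              rw [DDA, Finset.mem_filter, ← hxy]
              simp [hy]
            have c2 : x ∈ A' ↔ y ∉ DDA A' := by
              rw [DDA, Finset.mem_filter, ← hxy]
              simp [hy2]
            rw [c1, c2, ← mem_YY_iff hy, ← mem_YY_iff hy2, hrA, hY]
          · have hy2 : y ∉ A' := fun h => hy ((ih y hyy).2 h)
            have hyc : y ∈ (Aᶜ : Finset (Fin n)) := Finset.mem_compl.2 hy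
            have hyc' : y ∈ (A'ᶜ : Finset (Fin n)) := Finset.mem_compl.2 hy2
            have c1 : x ∈ A ↔ y ∈ DDB A := by
              rw [DDB, Finset.mem_filter, ← hxy]
              simp [hyc]
            have c2 : x ∈ A' ↔ y ∈ DDB A' := by
              rw [DDB, Finset.mem_filter, ← hxy]
              simp [hyc']
            rw [c1, c2, mem_DDB_char h0 hne hyc, mem_DDB_char h0' hne' hyc', hrB, hX, hcc]
  ext x
  exact key (x.val) x (le_refl _)

end Counting2
lemma card_dom (p : ℕ) [NeZero (2*p)] (hp : 1 ≤ p) :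
    ((univ : Finset (Finset (Fin (2*p)))).filter (fun A => 0 ∈ A ∧ A.card = p)).card
      = (2*p-1).choose (p-1) := by
  classical
  have hbij : ((univ : Finset (Finset (Fin (2*p)))).filter (fun A => 0 ∈ A ∧ A.card = p)).card
      = (((univ : Finset (Fin (2*p))).erase 0).powersetCard (p-1)).card := by
    apply Finset.card_bij (fun A _ => A.erase 0)
    · intro A hA
      obtain ⟨-, h0, hcA⟩ := Finset.mem_filter.1 hA |>.imp id id
      rw [Finset.mem_powersetCard]
      constructor
      · exact Finset.erase_subset_erase _ (Finset.subset_univ _)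
      · rw [Finset.card_erase_of_mem h0, hcA]
    · intro A hA B hB hAB
      have h0A : (0 : Fin (2*p)) ∈ A := ((Finset.mem_filter.1 hA).2).1
      have h0B : (0 : Fin (2*p)) ∈ B := ((Finset.mem_filter.1 hB).2).1
      rw [← Finset.insert_erase h0A, ← Finset.insert_erase h0B, hAB]
    · intro s hs
      rw [Finset.mem_powersetCard] at hs
      have h0s : (0 : Fin (2*p)) ∉ s := fun h => by
        have := hs.1 h
        rw [Finset.mem_erase] at this
        exact this.1 rfl
      refine ⟨insert 0 s, Finset.mem_filter.2 ⟨Finset.mem_univ _,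
        Finset.mem_insert_self _ _, ?_⟩, ?_⟩
      · rw [Finset.card_insert_of_notMem h0s, hs.2]; omega
      · rw [Finset.erase_insert h0s]
  rw [hbij, Finset.card_powersetCard, Finset.card_erase_of_mem (Finset.mem_univ _),
    Finset.card_univ, Fintype.card_fin]

lemma card_T (p : ℕ) (hp : 1 ≤ p) :
    ((((range (p-1)).powerset ×ˢ (range p).powerset)).filter
        (fun q => q.2.card = q.1.card + 1)).card = (2*p-1).choose (p-1) := by
  classical
  have hsplit : (((range (p-1)).powerset ×ˢ (range p).powerset)).filter
        (fun q => q.2.card = q.1.card + 1)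
      = (range p).biUnion
          (fun k => (range (p-1)).powersetCard k ×ˢ (range p).powersetCard (k+1)) := by
    ext q
    rw [Finset.mem_filter, Finset.mem_product, Finset.mem_powerset, Finset.mem_powerset,
      Finset.mem_biUnion]
    constructor
    · rintro ⟨⟨hq1, hq2⟩, hcard⟩
      refine ⟨q.1.card, ?_, ?_⟩
      · rw [Finset.mem_range]
        have := Finset.card_le_card hq1
        rw [Finset.card_range] at this
        omega
      · rw [Finset.mem_product, Finset.mem_powersetCard, Finset.mem_powersetCard]
        exact ⟨⟨hq1, rfl⟩, ⟨hq2, hcard⟩⟩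
    · rintro ⟨k, hk, hq⟩
      rw [Finset.mem_product, Finset.mem_powersetCard, Finset.mem_powersetCard] at hq
      exact ⟨⟨hq.1.1, hq.2.1⟩, by rw [hq.2.2, hq.1.2]⟩
  rw [hsplit, Finset.card_biUnion (by
    intro k hk k' hk' hne
    rw [Function.onFun, Finset.disjoint_left]
    intro q hq hq'
    rw [Finset.mem_product, Finset.mem_powersetCard] at hq hq'
    exact hne (hq.1.2 ▸ hq'.1.2 ▸ rfl))]
  have hterm : ∀ k ∈ range p,
      ((range (p-1)).powersetCard k ×ˢ (range p).powersetCard (k+1)).card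
        = (p-1).choose k * p.choose (p-1-k) := by
    intro k hk
    rw [Finset.mem_range] at hk
    rw [Finset.card_product, Finset.card_powersetCard, Finset.card_powersetCard,
      Finset.card_range, Finset.card_range]
    congr 1
    rw [← Nat.choose_symm (show k+1 ≤ p by omega)]
    congr 1
    omega
  rw [Finset.sum_congr rfl hterm]
  have hv := Nat.add_choose_eq (p-1) p (p-1)
  rw [Finset.Nat.sum_antidiagonal_eq_sum_range_succ_mk] at hv
  have hpp : (p - 1) + 1 = p := by omega
  have hrw : (p-1) + p = 2*p - 1 := by omega
  rw [Nat.succ_eq_add_one, hrw, hpp] at hv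
  exact hv.symm
lemma card_sets (p g : ℕ) [NeZero (2*p)] (hp : 1 ≤ p) :
    Nat.card {A : Finset (Fin (2 * p)) // 0 ∈ A ∧ A.card = p ∧ (chgSet A).card = 2*g+2}
      = (p-1).choose g * p.choose (g+1) := by
  classical
  rw [Nat.card_eq_fintype_card, Fintype.card_subtype]
  have hgoal : ∀ (inst : DecidablePred (fun A : Finset (Fin (2*p)) =>
      0 ∈ A ∧ A.card = p ∧ (chgSet A).card = 2*g+2)),
      (@Finset.filter _ _ inst univ).card = (p-1).choose g * p.choose (g+1) := by
    intro inst
    set Phi : Finset (Fin (2*p)) → Finset ℕ × Finset ℕ := fun A => (XX A, YY A) with hPhi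
    set dom := (univ : Finset (Finset (Fin (2*p)))).filter (fun A => 0 ∈ A ∧ A.card = p) with hdom
    have hdomg : (@Finset.filter _ _ inst univ) =
        (univ : Finset (Finset (Fin (2*p)))).filter
          (fun A => 0 ∈ A ∧ A.card = p ∧ (chgSet A).card = 2*g+2) := by
      apply Finset.filter_congr_decidable
    rw [hdomg]
    set domg := (univ : Finset (Finset (Fin (2*p)))).filter
        (fun A => 0 ∈ A ∧ A.card = p ∧ (chgSet A).card = 2*g+2) with hdomg'
    set T := (((range (p-1)).powerset ×ˢ (range p).powerset)).filter
        (fun q => q.2.card = q.1.card + 1) with hT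
    set Tg := (range (p-1)).powersetCard g ×ˢ (range p).powersetCard (g+1) with hTg
    have facts : ∀ A : Finset (Fin (2*p)), 0 ∈ A → A.card = p →
        (Aᶜ : Finset (Fin (2*p))).card = p ∧ (Aᶜ : Finset (Fin (2*p))).Nonempty ∧
        (YY A).card = (DDA A).card ∧ (XX A).card = (DDA A).card - 1 ∧
        1 ≤ (DDA A).card ∧ YY A ⊆ range p ∧ XX A ⊆ range (p-1) := by
      intro A h0 hcA
      have hAcc : (Aᶜ : Finset (Fin (2*p))).card = p := by
        rw [Finset.card_compl, Fintype.card_fin, hcA]; omega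
      have hAcne : (Aᶜ : Finset (Fin (2*p))).Nonempty := by
        rw [← Finset.card_pos, hAcc]; omega
      have hAnu : A ≠ univ := fun h => by
        rw [h, Finset.card_univ, Fintype.card_fin] at hcA; omega
      have hDAne : 1 ≤ (DDA A).card := by
        obtain ⟨x, hx, hx'⟩ := exists_change ⟨0, h0⟩ hAnu
        exact Finset.card_pos.2 ⟨x, Finset.mem_filter.2 ⟨hx, hx'⟩⟩
      have hYc : (YY A).card = (DDA A).card := by
        apply Finset.card_image_of_injOn
        intro x hx y hy h
        exact rnk_injOn (Finset.mem_filter.1 (Finset.mem_coe.1 hx)).1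
          (Finset.mem_filter.1 (Finset.mem_coe.1 hy)).1 h
      have himgB : ((DDB A).image (rnk Aᶜ)).card = (DDB A).card := by
        apply Finset.card_image_of_injOn
        intro x hx y hy h
        exact rnk_injOn (Finset.mem_filter.1 (Finset.mem_coe.1 hx)).1
          (Finset.mem_filter.1 (Finset.mem_coe.1 hy)).1 h
      have hmax_mem : (Aᶜ : Finset (Fin (2*p))).card - 1 ∈ (DDB A).image (rnk Aᶜ) :=
        Finset.mem_image.2 ⟨Aᶜ.max' hAcne, max_compl_mem_DDB h0 hAcne,
          rnk_max (Finset.max'_mem _ _) (fun w hw => Finset.le_max' _ _ hw)⟩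
      have hXc : (XX A).card = (DDA A).card - 1 := by
        rw [XX, Finset.card_sdiff_of_subset (Finset.singleton_subset_iff.2 hmax_mem),
          Finset.card_singleton, himgB, ← card_DDA_eq_card_DDB]
      have hYsub : YY A ⊆ range p := by
        intro y hy
        obtain ⟨u, hu, rfl⟩ := Finset.mem_image.1 hy
        have h := rnk_lt_card (Finset.mem_filter.1 hu).1
        rw [hcA] at h
        exact Finset.mem_range.2 h
      have hXsub : XX A ⊆ range (p-1) := by
        intro y hy
        obtain ⟨hy1, hy2⟩ := Finset.mem_sdiff.1 hy
        obtain ⟨u, hu, rfl⟩ := Finset.mem_image.1 hy1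
        have h1 : rnk Aᶜ u < p := by
          have h := rnk_lt_card (Finset.mem_filter.1 hu).1
          rwa [hAcc] at h
        have h2 : rnk Aᶜ u ≠ p - 1 := by
          rw [Finset.mem_singleton, hAcc] at hy2; exact hy2
        rw [Finset.mem_range]
        omega
      exact ⟨hAcc, hAcne, hYc, hXc, hDAne, hYsub, hXsub⟩
    have hphiT : ∀ A ∈ dom, Phi A ∈ T := by
      intro A hA
      obtain ⟨-, h0, hcA⟩ := Finset.mem_filter.1 hA |>.imp id id
      obtain ⟨c1, c2, c3, c4, c5, c6, c7⟩ := facts A h0 hcA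
      rw [hT, Finset.mem_filter, Finset.mem_product, Finset.mem_powerset, Finset.mem_powerset]
      exact ⟨⟨c7, c6⟩, by simp only [hPhi]; omega⟩
    have hinj : Set.InjOn Phi ↑dom := by
      intro A hA B hB hAB
      rw [Finset.mem_coe, hdom, Finset.mem_filter] at hA hB
      obtain ⟨a1, a2, a3, a4, a5, a6, a7⟩ := facts A hA.2.1 hA.2.2
      obtain ⟨b1, b2, b3, b4, b5, b6, b7⟩ := facts B hB.2.1 hB.2.2
      have h1 : XX A = XX B := congrArg Prod.fst hAB
      have h2 : YY A = YY B := congrArg Prod.snd hAB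
      exact Phi_injective hA.2.1 hB.2.1 (by rw [a1, b1]) a2 b2 h1 h2
    have himdom : dom.image Phi = T := by
      apply Finset.eq_of_subset_of_card_le
      · intro q hq
        obtain ⟨A, hA, rfl⟩ := Finset.mem_image.1 hq
        exact hphiT A hA
      · rw [Finset.card_image_of_injOn hinj, hdom, card_dom p hp, hT, card_T p hp]
    have hsub1 : domg.image Phi ⊆ Tg := by
      intro q hq
      obtain ⟨A, hA, rfl⟩ := Finset.mem_image.1 hq
      rw [hdomg', Finset.mem_filter] at hA
      obtain ⟨-, h0, hcA, hchg⟩ := hA.imp id id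
      obtain ⟨c1, c2, c3, c4, c5, c6, c7⟩ := facts A h0 hcA
      have hDD : (DDA A).card = g + 1 := by
        have := card_chgSet_eq A
        have := card_DDA_eq_card_DDB A
        omega
      rw [hTg, Finset.mem_product, Finset.mem_powersetCard, Finset.mem_powersetCard]
      exact ⟨⟨c7, by simp only [hPhi]; omega⟩, ⟨c6, by simp only [hPhi]; omega⟩⟩
    have hsub2 : Tg ⊆ domg.image Phi := by
      intro q hq
      rw [hTg, Finset.mem_product, Finset.mem_powersetCard, Finset.mem_powersetCard] at hq
      have hqT : q ∈ T := by
        rw [hT, Finset.mem_filter, Finset.mem_product, Finset.mem_powerset, Finset.mem_powerset]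
        exact ⟨⟨hq.1.1, hq.2.1⟩, by rw [hq.1.2, hq.2.2]⟩
      rw [← himdom] at hqT
      obtain ⟨A, hA, rfl⟩ := Finset.mem_image.1 hqT
      obtain ⟨-, h0, hcA⟩ := Finset.mem_filter.1 hA |>.imp id id
      obtain ⟨c1, c2, c3, c4, c5, c6, c7⟩ := facts A h0 hcA
      refine Finset.mem_image.2 ⟨A, ?_, rfl⟩
      rw [hdomg', Finset.mem_filter]
      have hXg : (XX A).card = g := hq.1.2
      have hDD : (DDA A).card = g + 1 := by omega
      have hchg : (chgSet A).card = 2*g+2 := by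
        have := card_chgSet_eq A
        have := card_DDA_eq_card_DDB A
        omega
      exact ⟨Finset.mem_univ _, h0, hcA, hchg⟩
    have himg : domg.image Phi = Tg := subset_antisymm hsub1 hsub2
    have hdomsub : (domg : Set (Finset (Fin (2*p)))) ⊆ ↑dom := by
      intro A hA
      rw [Finset.mem_coe, hdomg', Finset.mem_filter] at hA
      rw [Finset.mem_coe, hdom, Finset.mem_filter]
      exact ⟨hA.1, hA.2.1, hA.2.2.1⟩
    calc domg.card = (domg.image Phi).card :=
          (Finset.card_image_of_injOn (hinj.mono hdomsub)).symm
      _ = Tg.card := by rw [himg]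
      _ = (p-1).choose g * p.choose (g+1) := by
          rw [hTg, Finset.card_product, Finset.card_powersetCard, Finset.card_powersetCard,
            Finset.card_range, Finset.card_range]
  exact hgoal _

theorem count_equal_two_block_partitions_by_genus (p g : ℕ) (hp : 1 ≤ p) :
    Nat.card {P : Finpartition (univ : Finset (Fin (2 * p))) //
        (∃ C₁ C₂ : Finset (Fin (2 * p)), P.parts = {C₁, C₂} ∧ C₁ ≠ C₂ ∧
          C₁.card = p ∧ C₂.card = p) ∧ HasGenus P g} =
      (p - 1).choose g * p.choose (g + 1) := by
  haveI : NeZero (2*p) := ⟨by omega⟩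
  rw [card_parts_eq_card_sets p g hp, card_sets p g hp]
end
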